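/- For all C ≥ 0 there exists δ ≥ 0 with the following property. Let X be a geodesic metric space and let Y ⊆ X be a C-strongly contracting subset satisfying Gromov's 4-point condition with constant C. Then for any two points x, y ∈ X, the set Y ∪ {x, y} satisfies Gromov's 4-point condition with constant δ. -/

import Mathlib

universe u

/-- A metric space is *injective* (hyperconvex) if every family of closed balls that
pairwise intersect (i.e. `dist xᵢ xⱼ ≤ rᵢ + rⱼ` for `i ≠ j`) has a common point.
Families are encoded as sets of (center, radius) pairs. -/
def IsInjectiveSpace (X : Type u) [MetricSpace X] : Prop :=
  ∀ s : Set (X × ℝ), (∀ p ∈ s, 0 ≤ p.2) →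
    (∀ p ∈ s, ∀ q ∈ s, p ≠ q → dist p.1 q.1 ≤ p.2 + q.2) →
    ∃ z : X, ∀ p ∈ s, dist z p.1 ≤ p.2

/-- `γ : [0, dist x y] → X` is a geodesic from `x` to `y`. -/
def IsGeodesicSegment {X : Type u} [MetricSpace X] (γ : ℝ → X) (x y : X) : Prop :=
  γ 0 = x ∧ γ (dist x y) = y ∧
    ∀ s ∈ Set.Icc (0 : ℝ) (dist x y), ∀ t ∈ Set.Icc (0 : ℝ) (dist x y),
      dist (γ s) (γ t) = |s - t|

/-- A metric space is geodesic if any two points are joined by a geodesic. -/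
def IsGeodesicSpace (X : Type u) [MetricSpace X] : Prop :=
  ∀ x y : X, ∃ γ : ℝ → X, IsGeodesicSegment γ x y

/-- `γ` restricted to `I ⊆ ℝ` is a `(k, c)`-quasi-geodesic. -/
def IsQuasiGeodesicOn {X : Type u} [MetricSpace X] (k c : ℝ) (γ : ℝ → X) (I : Set ℝ) : Prop :=
  ∀ s ∈ I, ∀ t ∈ I,
    (1 / k) * |s - t| - c ≤ dist (γ s) (γ t) ∧ dist (γ s) (γ t) ≤ k * |s - t| + c

/-- A subset `Y` is `M`-Morse if every `(k, c)`-quasi-geodesic with endpoints on `Y`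
stays in the `M k c`-neighborhood of `Y`. -/
def IsMorse {X : Type u} [MetricSpace X] (M : ℝ → ℝ → ℝ) (Y : Set X) : Prop :=
  ∀ k c : ℝ, 1 ≤ k → 0 ≤ c → ∀ a b : ℝ, ∀ γ : ℝ → X,
    IsQuasiGeodesicOn k c γ (Set.Icc a b) → γ a ∈ Y → γ b ∈ Y →
    ∀ t ∈ Set.Icc a b, Metric.infDist (γ t) Y ≤ M k c

/-- The coarse closest-point projection `π_Y(x) = {y ∈ Y : d(x,y) ≤ d(x,Y) + 1}`. -/
def coarseProj {X : Type u} [MetricSpace X] (Y : Set X) (x : X) : Set X :=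
  {y | y ∈ Y ∧ dist x y ≤ Metric.infDist x Y + 1}

/-- `Y` is `D`-strongly contracting: for every closed ball `B` disjoint from `Y`,
the projection `π_Y(B)` has diameter at most `D`. -/
def IsStronglyContracting {X : Type u} [MetricSpace X] (D : ℝ) (Y : Set X) : Prop :=
  ∀ (c : X) (r : ℝ), Disjoint (Metric.closedBall c r) Y →
    ∀ x₁ ∈ Metric.closedBall c r, ∀ x₂ ∈ Metric.closedBall c r,
      ∀ y₁ ∈ coarseProj Y x₁, ∀ y₂ ∈ coarseProj Y x₂, dist y₁ y₂ ≤ D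

/-- `γ : I → X` is an `(L; D; k, c)`-local strongly contracting quasi-geodesic:
every subsegment of length at most `L` is a `(k,c)`-quasi-geodesic with
`D`-strongly contracting image. -/
def IsLocalSCQuasiGeodesic {X : Type u} [MetricSpace X] (L D k c : ℝ) (γ : ℝ → X)
    (I : Set ℝ) : Prop :=
  ∀ s t : ℝ, s ≤ t → Set.Icc s t ⊆ I → t - s ≤ L →
    IsQuasiGeodesicOn k c γ (Set.Icc s t) ∧ IsStronglyContracting D (γ '' Set.Icc s t)

/-- `γ : I → X` is a `(B; M; k, c)`-local Morse quasi-geodesic. -/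
def IsLocalMorseQuasiGeodesic {X : Type u} [MetricSpace X] (B : ℝ) (M : ℝ → ℝ → ℝ)
    (k c : ℝ) (γ : ℝ → X) (I : Set ℝ) : Prop :=
  ∀ s t : ℝ, s ≤ t → Set.Icc s t ⊆ I → t - s ≤ B →
    IsQuasiGeodesicOn k c γ (Set.Icc s t) ∧ IsMorse M (γ '' Set.Icc s t)

/-- The Morse local-to-global property. -/
def HasMorseLocalToGlobal (X : Type u) [MetricSpace X] : Prop :=
  ∀ (M : ℝ → ℝ → ℝ) (k c : ℝ), 1 ≤ k → 0 ≤ c →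
    ∃ (B : ℝ) (M' : ℝ → ℝ → ℝ) (k' c' : ℝ), 0 ≤ B ∧ 1 ≤ k' ∧ 0 ≤ c' ∧
      ∀ I : Set ℝ, I.OrdConnected → ∀ γ : ℝ → X,
        IsLocalMorseQuasiGeodesic B M k c γ I →
        IsQuasiGeodesicOn k' c' γ I ∧ IsMorse M' (γ '' I)

/-- `A` satisfies Gromov's 4-point condition with constant `C`. -/
def Gromov4 {X : Type u} [MetricSpace X] (C : ℝ) (A : Set X) : Prop :=
  ∀ x ∈ A, ∀ y ∈ A, ∀ w ∈ A, ∀ z ∈ A,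
    dist x y + dist w z ≤ max (dist x z + dist w y) (dist x w + dist y z) + C


/-!
Strong contraction yields the projection formula: if `x'` is a coarse projection of `x`, then
`d(x, x') + d(x', b) ≤ d(x, b) + const` for every `b ∈ Y`, so `x'` is a coarse gate of `x` on `Y`.
For two points `p, q` either a geodesic `[p, q]` comes close to `Y`, and then the broken path
`p, p', q', q` through the gates is almost geodesic, or it stays far from `Y`, and then the
projections `p', q'` are uniformly close, so `p'` serves as a common gate of `p` and `q`.
In the 4-point inequality for `Y ∪ {p, q}` every distance is, up to a bounded error, the
distance between the gates plus the distances to the gates, so the inequality is inherited from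
the gates in `Y`; a pair with a common gate only occurs where the inequality for the gates is
degenerate.
-/

open Metric Set

section StronglyContracting

variable {X : Type u} [MetricSpace X] {Y : Set X} {C : ℝ}

theorem coarseProj_nonempty (hY : Y.Nonempty) (x : X) : (coarseProj Y x).Nonempty := by
  obtain ⟨y, hy, hlt⟩ := (infDist_lt_iff hY).mp (lt_add_one (infDist x Y))
  exact ⟨y, hy, hlt.le⟩

theorem IsStronglyContracting.dist_coarseProj_le (hSC : IsStronglyContracting C Y)
    {c x₁ x₂ y₁ y₂ : X} {r : ℝ} (hr : r < infDist c Y) (h₁ : dist c x₁ ≤ r) (h₂ : dist c x₂ ≤ r)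
    (hy₁ : y₁ ∈ coarseProj Y x₁) (hy₂ : y₂ ∈ coarseProj Y x₂) : dist y₁ y₂ ≤ C :=
  hSC c r (disjoint_closedBall_of_lt_infDist hr) x₁ (mem_closedBall'.2 h₁) x₂
    (mem_closedBall'.2 h₂) y₁ hy₁ y₂ hy₂

namespace IsGeodesicSegment

variable {γ : ℝ → X} {x y : X} {t : ℝ}

theorem dist_start_apply (hγ : IsGeodesicSegment γ x y) (ht : t ∈ Icc 0 (dist x y)) :
    dist x (γ t) = t := by
  have h := hγ.2.2 0 ⟨le_rfl, dist_nonneg⟩ t ht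
  rwa [hγ.1, zero_sub, abs_neg, abs_of_nonneg ht.1] at h

theorem dist_apply_end (hγ : IsGeodesicSegment γ x y) (ht : t ∈ Icc 0 (dist x y)) :
    dist (γ t) y = dist x y - t := by
  have h := hγ.2.2 t ht (dist x y) ⟨dist_nonneg, le_rfl⟩
  rwa [hγ.2.1, abs_sub_comm, abs_of_nonneg (sub_nonneg.2 ht.2)] at h

theorem shift (hγ : IsGeodesicSegment γ x y) (ht : t ∈ Icc 0 (dist x y)) :
    IsGeodesicSegment (fun s => γ (s + t)) (γ t) y := by
  refine ⟨by simp, by simp only [hγ.dist_apply_end ht, sub_add_cancel, hγ.2.1],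
    fun a ha b hb => ?_⟩
  rw [hγ.dist_apply_end ht] at ha hb
  simpa using hγ.2.2 (a + t) ⟨by linarith [ha.1, ht.1], by linarith [ha.2]⟩
    (b + t) ⟨by linarith [hb.1, ht.1], by linarith [hb.2]⟩

end IsGeodesicSegment

def IsCoarseGate (K : ℝ) (Y : Set X) (u u' : X) : Prop :=
  u' ∈ Y ∧ ∀ b ∈ Y, dist u u' + dist u' b ≤ dist u b + K

theorem isCoarseGate_self {K : ℝ} (hK : 0 ≤ K) {u : X} (hu : u ∈ Y) : IsCoarseGate K Y u u :=
  ⟨hu, fun b _ => by rw [dist_self, zero_add]; linarith⟩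

theorem IsCoarseGate.mono {K K' : ℝ} {u u' : X} (h : IsCoarseGate K Y u u') (hK : K ≤ K') :
    IsCoarseGate K' Y u u' :=
  ⟨h.1, fun b hb => (h.2 b hb).trans (by linarith)⟩

theorem IsCoarseGate.of_dist_le {K E : ℝ} {u u' v' : X} (h : IsCoarseGate K Y u u')
    (hv' : v' ∈ Y) (hd : dist u' v' ≤ E) : IsCoarseGate (K + 2 * E) Y u v' :=
  ⟨hv', fun b hb => by
    linarith [h.2 b hb, dist_triangle u u' v', dist_triangle v' u' b, dist_comm u' v']⟩

def IsAlmostGeodesicVia (K : ℝ) (u u' v' v : X) : Prop :=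
  dist u u' + dist u' v' + dist v' v ≤ dist u v + K

theorem IsAlmostGeodesicVia.symm {K : ℝ} {u u' v' v : X} (h : IsAlmostGeodesicVia K u u' v' v) :
    IsAlmostGeodesicVia K v v' u' u := by
  unfold IsAlmostGeodesicVia at *
  linarith [dist_comm u u', dist_comm u' v', dist_comm v' v, dist_comm u v]

/-- The hop has length `d(x, x') - 2 < d(x, Y)`, so the projection moves by at most `C`. -/
theorem IsStronglyContracting.exists_hop (hX : IsGeodesicSpace X)
    (hSC : IsStronglyContracting C Y) {x x' y : X} (hx' : x' ∈ coarseProj Y x) (hy : y ∈ Y)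
    (hxx' : 3 ≤ dist x x') :
    ∃ z z', z' ∈ coarseProj Y z ∧ dist z y ≤ dist x y - 1 ∧
      2 * (dist x x' + dist x' y - dist x y) ≤ 4 + 2 * C + (dist z z' + dist z' y - dist z y) := by
  obtain ⟨γ, hγ⟩ := hX x y
  have hxY : infDist x Y ≤ dist x y := infDist_le_dist_of_mem hy
  have hρ : dist x x' - 2 ∈ Icc 0 (dist x y) := ⟨by linarith, by linarith [hx'.2]⟩
  obtain ⟨z', hz'⟩ := coarseProj_nonempty ⟨y, hy⟩ (γ (dist x x' - 2))
  have hxz := hγ.dist_start_apply hρ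
  have hzy := hγ.dist_apply_end hρ
  have hx'z' : dist x' z' ≤ C :=
    hSC.dist_coarseProj_le (by linarith [hx'.2]) (by rw [dist_self]; exact hρ.1) hxz.le hx' hz'
  refine ⟨_, z', hz', by linarith, ?_⟩
  linarith [dist_triangle x' z' y, dist_triangle x' (γ (dist x x' - 2)) y,
    dist_triangle x' z' (γ (dist x x' - 2)), dist_comm z' (γ (dist x x' - 2))]

theorem IsStronglyContracting.isCoarseGate (hX : IsGeodesicSpace X) (hC : 0 ≤ C)
    (hSC : IsStronglyContracting C Y) {x x' : X} (hx' : x' ∈ coarseProj Y x) :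
    IsCoarseGate (2 * C + 6) Y x x' := by
  refine ⟨hx'.1, fun y hy => ?_⟩
  obtain ⟨n, hn⟩ := exists_nat_ge (dist x y)
  induction n generalizing x x' with
  | zero =>
    rw [Nat.cast_zero] at hn
    linarith [hx'.2, infDist_le_dist_of_mem (x := x) hy, dist_triangle x' x y, dist_comm x x']
  | succ n ih =>
    by_contra! h
    obtain ⟨z, z', hz', hzy, hdefect⟩ := hSC.exists_hop hX hx' hy
      (by linarith [dist_triangle x' x y, dist_comm x x'])
    have := ih hz' (by push_cast at hn; linarith)
    linarith

/-- Along a geodesic staying `2C + 2`-far from `Y`, each hop of length `d(·, Y) - 1` moves the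
projection by at most `C`, while it shortens the remaining excess by more than `2C`. -/
theorem IsStronglyContracting.dist_le_of_far_geodesic (hC : 0 ≤ C)
    (hSC : IsStronglyContracting C Y) {x y x' y' : X} {γ : ℝ → X}
    (hγ : IsGeodesicSegment γ x y) (hfar : ∀ t ∈ Icc 0 (dist x y), 2 * C + 2 < infDist (γ t) Y)
    (hx' : x' ∈ coarseProj Y x) (hy' : y' ∈ coarseProj Y y) :
    dist x' y' ≤ max (2 * C) (3 * C + (dist x y - infDist x Y - infDist y Y + 2) / 2) := by
  have hy : 2 * C + 2 < infDist y Y := by simpa [hγ.2.1] using hfar _ ⟨dist_nonneg, le_rfl⟩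
  have hx : 2 * C + 2 < infDist x Y := by simpa [hγ.1] using hfar 0 ⟨le_rfl, dist_nonneg⟩
  obtain ⟨n, hn⟩ := exists_nat_ge (dist x y)
  induction n generalizing x x' γ with
  | zero =>
    rw [Nat.cast_zero] at hn
    exact le_max_of_le_left <| (hSC.dist_coarseProj_le (c := x) (r := infDist x Y - 1) (by linarith)
      (by rw [dist_self]; linarith) (by linarith) hx' hy').trans (by linarith)
  | succ n ih =>
    obtain hball | hhop := le_or_gt (dist x y) (infDist x Y - 1)
    · exact le_max_of_le_left <| (hSC.dist_coarseProj_le (c := x) (by linarith)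
        (by rw [dist_self]; linarith) hball hx' hy').trans (by linarith)
    have hh : infDist x Y - 1 ∈ Icc 0 (dist x y) := ⟨by linarith, hhop.le⟩
    obtain ⟨z', hz'⟩ := coarseProj_nonempty ⟨y', hy'.1⟩ (γ (infDist x Y - 1))
    have hxz := hγ.dist_start_apply hh
    have hzy := hγ.dist_apply_end hh
    have hz := hfar _ hh
    have hx'z' : dist x' z' ≤ C :=
      hSC.dist_coarseProj_le (c := x) (by linarith) (by rw [dist_self]; linarith) hxz.le hx' hz'
    obtain hS | hS := le_or_gt (dist x y - infDist x Y - infDist y Y + 2) 0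
    · have hz'y' : dist z' y' ≤ C := hSC.dist_coarseProj_le (c := y) (r := infDist y Y - 1)
        (by linarith) (by rw [dist_comm]; linarith) (by rw [dist_self]; linarith) hz' hy'
      exact le_max_of_le_left (by linarith [dist_triangle x' z' y'])
    have hz'y' := ih (hγ.shift hh)
      (fun s hs => hfar _ ⟨by linarith [hs.1, hh.1], by linarith [hs.2]⟩) hz'
      hz (by push_cast at hn; linarith)
    refine le_max_of_le_right ?_
    rcases max_cases (2 * C) (3 * C + (dist (γ (infDist x Y - 1)) y -
        infDist (γ (infDist x Y - 1)) Y - infDist y Y + 2) / 2) with ⟨hm, _⟩ | ⟨hm, _⟩ <;>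
      rw [hm] at hz'y' <;> linarith [dist_triangle x' z' y']

theorem IsStronglyContracting.exists_coarseGates (hX : IsGeodesicSpace X) (hC : 0 ≤ C)
    (hSC : IsStronglyContracting C Y) (hY : Y.Nonempty) (p q : X) :
    ∃ p' q', IsCoarseGate (14 * C + 18) Y p p' ∧ IsCoarseGate (14 * C + 18) Y q q' ∧
      (IsAlmostGeodesicVia (14 * C + 18) p p' q' q ∨ p' = q') := by
  obtain ⟨p', hp'⟩ := coarseProj_nonempty hY p
  obtain ⟨q', hq'⟩ := coarseProj_nonempty hY q
  have hp := hSC.isCoarseGate hX hC hp'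
  have hq := hSC.isCoarseGate hX hC hq'
  obtain ⟨γ, hγ⟩ := hX p q
  by_cases hfar : ∀ t ∈ Icc 0 (dist p q), 2 * C + 2 < infDist (γ t) Y
  · have hp'q' : dist p' q' ≤ 6 * C + 4 := by
      have := hSC.dist_le_of_far_geodesic hC hγ hfar hp' hq'
      rcases max_cases (2 * C) (3 * C + (dist p q - infDist p Y - infDist q Y + 2) / 2)
        with ⟨hm, _⟩ | ⟨hm, _⟩ <;> rw [hm] at this <;>
        linarith [dist_triangle4 p p' q' q, hp'.2, hq'.2, dist_comm q' q]
    exact ⟨p', p', hp.mono (by linarith), (hq.of_dist_le hp'.1 (dist_comm q' p' ▸ hp'q')).mono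
      (by linarith), Or.inr rfl⟩
  push Not at hfar
  obtain ⟨t, ht, hnear⟩ := hfar
  obtain ⟨w, hw⟩ := coarseProj_nonempty hY (γ t)
  refine ⟨p', q', hp.mono (by linarith), hq.mono (by linarith), Or.inl ?_⟩
  unfold IsAlmostGeodesicVia
  linarith [hp.2 w hw.1, hq.2 w hw.1, hγ.dist_start_apply ht, hγ.dist_apply_end ht, hw.2,
    dist_triangle p (γ t) w, dist_triangle q (γ t) w, dist_triangle p' w q', dist_comm q (γ t),
    dist_comm w q', dist_comm q' q]

end StronglyContracting

section FourPoint

variable {X : Type u} [MetricSpace X]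

theorem Gromov4.mono {C : ℝ} {A B : Set X} (h : Gromov4 C A) (hBA : B ⊆ A) : Gromov4 C B :=
  fun x hx y hy w hw z hz => h x (hBA hx) y (hBA hy) w (hBA hw) z (hBA hz)

theorem fourPoint_of_coincidence {δ : ℝ} (hδ : 0 ≤ δ) {x y w z : X}
    (h : x = y ∨ x = w ∨ x = z ∨ y = w ∨ y = z ∨ w = z) :
    dist x y + dist w z ≤ max (dist x z + dist w y) (dist x w + dist y z) + δ := by
  rcases h with rfl | rfl | rfl | rfl | rfl | rfl
  · linarith [dist_triangle w x z, le_max_left (dist x z + dist w x) (dist x w + dist x z),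
      dist_comm w x, dist_self x]
  · linarith [le_max_left (dist x z + dist x y) (dist x x + dist y z), dist_self x]
  · linarith [le_max_right (dist x x + dist w y) (dist x w + dist y x), dist_comm w x,
      dist_comm y x, dist_self x]
  · linarith [le_max_right (dist x z + dist y y) (dist x y + dist y z), dist_self y]
  · linarith [le_max_left (dist x y + dist w y) (dist x w + dist y y), dist_self y]
  · linarith [le_max_left (dist x w + dist w y) (dist x w + dist y w), dist_triangle x w y,
      dist_self w]

theorem gromov4_pair {δ : ℝ} (hδ : 0 ≤ δ) (p q : X) : Gromov4 δ {p, q} := by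
  intro x hx y hy w hw z _
  refine fourPoint_of_coincidence hδ ?_
  simp only [mem_insert_iff, mem_singleton_iff] at hx hy hw
  rcases hx with rfl | rfl <;> rcases hy with rfl | rfl <;> rcases hw with rfl | rfl <;> simp

theorem add_dist_le_of_isAlmostGeodesicVia {c K : ℝ} {x y w z x' y' w' z' : X}
    (h' : dist x' y' + dist w' z' ≤ dist x' w' + dist y' z' + c)
    (hxw : IsAlmostGeodesicVia K x x' w' w) (hyz : IsAlmostGeodesicVia K y y' z' z) :
    dist x y + dist w z ≤ dist x w + dist y z + (c + 2 * K) := by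
  unfold IsAlmostGeodesicVia at hxw hyz
  linarith [dist_triangle4 x x' y' y, dist_triangle4 w w' z' z, dist_comm y' y, dist_comm w w',
    dist_comm w' z']

/-- A pair with a common image makes the 4-point inequality of the images hold trivially for the
other pairing, which avoids that pair. -/
theorem gromov4_of_isAlmostGeodesicVia {C K : ℝ} (hC : 0 ≤ C) (hK : 0 ≤ K) {A : Set X}
    (s : X → X) (hs : Gromov4 C (s '' A))
    (hA : ∀ u ∈ A, ∀ v ∈ A, u ≠ v → IsAlmostGeodesicVia K u (s u) (s v) v ∨
      (s u = s v ∧ ∀ t ∈ A, t ≠ u → t ≠ v →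
        IsAlmostGeodesicVia K t (s t) (s u) u ∧ IsAlmostGeodesicVia K t (s t) (s v) v)) :
    Gromov4 (C + 2 * K) A := by
  intro x hx y hy w hw z hz
  by_cases hcoinc : x = y ∨ x = w ∨ x = z ∨ y = w ∨ y = z ∨ w = z
  · exact fourPoint_of_coincidence (by positivity) hcoinc
  push Not at hcoinc
  obtain ⟨hxy, hxw, hxz, hyw, hyz, hwz⟩ := hcoinc
  have opt₁ (h : dist (s x) (s y) + dist (s z) (s w) ≤ dist (s x) (s z) + dist (s y) (s w) + C)
      (hxz : IsAlmostGeodesicVia K x (s x) (s z) z) (hwy : IsAlmostGeodesicVia K w (s w) (s y) y) :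
      dist x y + dist w z ≤ max (dist x z + dist w y) (dist x w + dist y z) + (C + 2 * K) := by
    have := add_dist_le_of_isAlmostGeodesicVia h hxz hwy.symm
    linarith [le_max_left (dist x z + dist w y) (dist x w + dist y z), dist_comm z w,
      dist_comm y w]
  have opt₂ (h : dist (s x) (s y) + dist (s w) (s z) ≤ dist (s x) (s w) + dist (s y) (s z) + C)
      (hxw : IsAlmostGeodesicVia K x (s x) (s w) w) (hyz : IsAlmostGeodesicVia K y (s y) (s z) z) :
      dist x y + dist w z ≤ max (dist x z + dist w y) (dist x w + dist y z) + (C + 2 * K) := by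
    have := add_dist_le_of_isAlmostGeodesicVia h hxw hyz
    linarith [le_max_right (dist x z + dist w y) (dist x w + dist y z)]
  rcases hA x hx z hz hxz with gxz | ⟨exz, third⟩
  swap
  · exact opt₂ (by rw [exz]; linarith [dist_comm (s y) (s z), dist_comm (s w) (s z)])
      (third w hw hxw.symm hwz).1.symm (third y hy hxy.symm hyz).2
  rcases hA w hw y hy hyw.symm with gwy | ⟨ewy, third⟩
  swap
  · exact opt₂ (by rw [ewy]; linarith) (third x hx hxw hxy).1 (third z hz hwz.symm hyz.symm).2.symm
  rcases hA x hx w hw hxw with gxw | ⟨exw, third⟩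
  swap
  · exact opt₁ (by rw [exw]; linarith [dist_comm (s w) (s y), dist_comm (s z) (s w)]) gxz gwy
  rcases hA y hy z hz hyz with gyz | ⟨eyz, third⟩
  swap
  · exact opt₁ (by rw [eyz]; linarith [dist_comm (s z) (s w)]) gxz gwy
  have hG := hs _ (mem_image_of_mem s hx) _ (mem_image_of_mem s hy) _ (mem_image_of_mem s hw) _
    (mem_image_of_mem s hz)
  rcases max_cases (dist (s x) (s z) + dist (s w) (s y)) (dist (s x) (s w) + dist (s y) (s z))
    with ⟨hm, _⟩ | ⟨hm, _⟩ <;> rw [hm] at hG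
  · exact opt₁ (by linarith [dist_comm (s z) (s w), dist_comm (s w) (s y)]) gxz gwy
  · exact opt₂ hG gxw gyz

theorem gromov4_union_pair {C K : ℝ} (hC : 0 ≤ C) (hK : 0 ≤ K) {Y : Set X} (hY : Gromov4 C Y)
    {p q p' q' : X} (hp : IsCoarseGate K Y p p') (hq : IsCoarseGate K Y q q')
    (hpq : IsAlmostGeodesicVia K p p' q' q ∨ p' = q') : Gromov4 (C + 2 * K) (Y ∪ {p, q}) := by
  classical
  let s : X → X := fun u => if u = p then p' else if u = q then q' else u
  have hs_of_ne {u : X} (hup : u ≠ p) (huq : u ≠ q) : s u = u := by simp [s, hup, huq]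
  have hs_gate (u : X) (hu : u ∈ Y ∪ {p, q}) : IsCoarseGate K Y u (s u) := by
    by_cases hup : u = p
    · rw [hup]; simpa [s] using hp
    by_cases huq : u = q
    · have hqp : q ≠ p := fun h => hup (huq.trans h)
      rw [huq]; simpa [s, hqp] using hq
    rw [hs_of_ne hup huq]
    exact isCoarseGate_self hK (by simpa [hup, huq] using hu)
  have hgood (t : X) (ht : t ∈ Y ∪ {p, q}) (htp : t ≠ p) (htq : t ≠ q) (v : X)
      (hv : v ∈ Y ∪ {p, q}) : IsAlmostGeodesicVia K t (s t) (s v) v := by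
    have := (hs_gate v hv).2 t (by simpa [htp, htq] using ht)
    unfold IsAlmostGeodesicVia
    rw [hs_of_ne htp htq, dist_self, zero_add]
    linarith [dist_comm v (s v), dist_comm (s v) t, dist_comm v t]
  refine gromov4_of_isAlmostGeodesicVia hC hK s (hY.mono ?_) fun u hu v hv huv => ?_
  · rintro _ ⟨u, hu, rfl⟩
    exact (hs_gate u hu).1
  by_cases hu' : u ≠ p ∧ u ≠ q
  · exact Or.inl (hgood u hu hu'.1 hu'.2 v hv)
  by_cases hv' : v ≠ p ∧ v ≠ q
  · exact Or.inl (hgood v hv hv'.1 hv'.2 u hu).symm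
  push Not at hu' hv'
  have huv' : u = p ∧ v = q ∨ u = q ∧ v = p := by
    rcases eq_or_ne u p with rfl | hup
    · exact Or.inl ⟨rfl, hv' (Ne.symm huv)⟩
    · exact Or.inr ⟨hu' hup, by_contra fun hvp => huv ((hu' hup).trans (hv' hvp).symm)⟩
  rcases hpq with near | rfl
  · left
    rcases huv' with ⟨rfl, rfl⟩ | ⟨rfl, rfl⟩
    · simpa [s, Ne.symm huv] using near
    · simpa [s, huv] using near.symm
  · refine Or.inr ⟨by rcases huv' with ⟨rfl, rfl⟩ | ⟨rfl, rfl⟩ <;> simp [s],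
      fun t ht htu htv => ?_⟩
    have htp : t ≠ p := by rcases huv' with ⟨rfl, rfl⟩ | ⟨rfl, rfl⟩ <;> assumption
    have htq : t ≠ q := by rcases huv' with ⟨rfl, rfl⟩ | ⟨rfl, rfl⟩ <;> assumption
    exact ⟨hgood t ht htp htq u hu, hgood t ht htp htq v hv⟩

end FourPoint

/-- For all `C ≥ 0` there is `δ ≥ 0` so that, for every geodesic metric space `X`,
every `C`-strongly contracting subset `Y ⊆ X` satisfying Gromov's 4-point condition
with constant `C`, and any two points `x, y ∈ X`, the set `Y ∪ {x, y}` satisfies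
Gromov's 4-point condition with constant `δ`. -/
theorem adding_two_points_gromov4 (C : ℝ) (hC : 0 ≤ C) :
    ∃ δ : ℝ, 0 ≤ δ ∧
      ∀ (X : Type u) [MetricSpace X], IsGeodesicSpace X →
        ∀ Y : Set X, IsStronglyContracting C Y → Gromov4 C Y →
          ∀ x y : X, Gromov4 δ (Y ∪ {x, y}) := by
  refine ⟨C + 2 * (14 * C + 18), by positivity, fun X _ hX Y hSC hG x y => ?_⟩
  rcases Y.eq_empty_or_nonempty with rfl | hY
  · simpa using gromov4_pair (by positivity) x y
  obtain ⟨x', y', hx', hy', hxy⟩ := hSC.exists_coarseGates hX hC hY x y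
  exact gromov4_union_pair hC (by positivity) hG hx' hy' hxy
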